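/- arXiv:1501.04894 — 2 statements merged into one kernel-verified Lean document; each statement's English description precedes it below -/
import Mathlib

section
/- Let A be an n×n real matrix with all entries nonnegative. Then the spectral radius c of A (the maximum of |c'| over all complex eigenvalues c' of A) is itself a real eigenvalue of A with c ≥ 0, and A has an eigenvector v ∈ ℝ^n for the eigenvalue c whose components are all nonnegative and not all zero. -/
/-!
Let `μ` be a complex eigenvalue of maximal modulus `ρ` with eigenvector `x`. By the triangle
inequality `y = |x|` is a nonnegative vector with `ρ y ≤ A y`, hence `ρ^k y ≤ A^k y`. For `t > ρ`
Gelfand's formula makes the Neumann series `∑ (A/t)^k` converge, so `w = (1 - A/t)⁻¹ y` is a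
nonnegative combination of the `A^k y` and `w ≥ t/(t-ρ) • y`. This forces
`‖A w - ρ w‖ ≤ 2 (t - ρ) ‖w‖`, and letting `t → ρ` on the compact set of nonnegative unit
vectors yields a nonnegative eigenvector for `ρ`.
-/

open Matrix Filter Topology
open scoped NNReal ENNReal

variable {ι : Type*} [Fintype ι]

lemma spectrum.eventually_norm_pow_le {𝔸 : Type*} [NormedRing 𝔸] [NormedAlgebra ℂ 𝔸]
    [CompleteSpace 𝔸] (a : 𝔸) {s : ℝ≥0} (hs : spectralRadius ℂ a < s) :
    ∀ᶠ k : ℕ in atTop, ‖a ^ k‖ ≤ s ^ k := by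
  have hgelfand := spectrum.pow_nnnorm_pow_one_div_tendsto_nhds_spectralRadius a
  filter_upwards [hgelfand.eventually_lt_const hs, eventually_ge_atTop 1] with k hk hk1
  rw [← ENNReal.coe_rpow_of_nonneg _ (by positivity), ENNReal.coe_lt_coe] at hk
  have := NNReal.rpow_le_rpow hk.le (show (0 : ℝ) ≤ k by positivity)
  rw [← NNReal.rpow_mul, one_div, inv_mul_cancel₀ (by positivity), NNReal.rpow_one,
    NNReal.rpow_natCast] at this
  exact_mod_cast this

lemma Pi.norm_le_norm_of_nonneg_of_le {v w : ι → ℝ} (hv : 0 ≤ v) (hvw : v ≤ w) : ‖v‖ ≤ ‖w‖ :=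
  (pi_norm_le_iff_of_nonneg (norm_nonneg w)).mpr fun i => (Real.norm_of_nonneg (hv i)).trans_le <|
    (hvw i).trans <| (le_abs_self _).trans (norm_le_pi_norm w i)

lemma Matrix.mem_spectrum_iff_exists_mulVec_eq_smul {K : Type*} [Field K] [DecidableEq ι]
    (M : Matrix ι ι K) (μ : K) : μ ∈ spectrum K M ↔ ∃ v ≠ 0, M *ᵥ v = μ • v := by
  rw [spectrum.mem_iff, Algebra.algebraMap_eq_smul_one, Matrix.isUnit_iff_isUnit_det,
    isUnit_iff_ne_zero, not_not, ← Matrix.exists_mulVec_eq_zero_iff]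
  simp only [sub_mulVec, smul_mulVec, one_mulVec, sub_eq_zero, eq_comm]

lemma Matrix.exists_mem_spectrum_forall_norm_le [DecidableEq ι] [Nonempty ι]
    (M : Matrix ι ι ℂ) : ∃ μ ∈ spectrum ℂ M, ∀ ν ∈ spectrum ℂ M, ‖ν‖ ≤ ‖μ‖ := by
  obtain ⟨μ, hμ⟩ := IsAlgClosed.exists_root M.charpoly
    (by simp [charpoly_degree_eq_dim, Fintype.card_ne_zero])
  exact Set.exists_max_image _ norm M.finite_spectrum ⟨μ, mem_spectrum_iff_isRoot_charpoly.mpr hμ⟩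

section LinftyOpNorm

attribute [local instance] Matrix.linftyOpNormedAddCommGroup Matrix.linftyOpNormedRing
  Matrix.linftyOpNormedAlgebra

lemma Matrix.linfty_opNorm_map_ofReal {κ : Type*} [Fintype κ] (A : Matrix ι κ ℝ) :
    ‖A.map ((↑) : ℝ → ℂ)‖ = ‖A‖ := by
  simp [Matrix.linfty_opNorm_def]

lemma Matrix.summable_pow_inv_smul [DecidableEq ι] [Nonempty ι] (A : Matrix ι ι ℝ) {t : ℝ}
    (ht : ∀ μ ∈ spectrum ℂ (A.map ((↑) : ℝ → ℂ)), ‖μ‖ < t) :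
    Summable fun k : ℕ => (t⁻¹ • A) ^ k := by
  have hρ : spectralRadius ℂ (A.map ((↑) : ℝ → ℂ)) < t.toNNReal :=
    spectrum.spectralRadius_lt_of_forall_lt _ fun μ hμ => by
      rw [← NNReal.coe_lt_coe, coe_nnnorm]; exact (ht μ hμ).trans_le (Real.le_coe_toNNReal t)
  obtain ⟨s, hρs, hst⟩ := ENNReal.lt_iff_exists_nnreal_btwn.mp hρ
  rw [ENNReal.coe_lt_coe, ← NNReal.coe_lt_coe, Real.coe_toNNReal'] at hst
  have ht0 : 0 < t := by simpa using s.2.trans_lt hst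
  rw [max_eq_left ht0.le] at hst
  refine .of_norm_bounded_eventually (summable_geometric_of_lt_one (by positivity)
    ((div_lt_one ht0).mpr hst)) ?_
  rw [Nat.cofinite_eq_atTop]
  filter_upwards [spectrum.eventually_norm_pow_le _ hρs] with k hk
  have hmap : (A ^ k).map ((↑) : ℝ → ℂ) = A.map (↑) ^ k := map_pow Complex.ofRealHom.mapMatrix A k
  rw [smul_pow, norm_smul, ← Matrix.linfty_opNorm_map_ofReal, hmap, div_pow, norm_pow, norm_inv,
    Real.norm_of_nonneg ht0.le, inv_pow, inv_mul_eq_div]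
  gcongr

end LinftyOpNorm

namespace Matrix

lemma exists_nonneg_mulVec_eq_smul_of_forall_approx (A : Matrix ι ι ℝ) (r : ℝ)
    (h : ∀ ε > 0, ∃ w : ι → ℝ, 0 ≤ w ∧ w ≠ 0 ∧ ‖A *ᵥ w - r • w‖ ≤ ε * ‖w‖) :
    ∃ v : ι → ℝ, 0 ≤ v ∧ v ≠ 0 ∧ A *ᵥ v = r • v := by
  set K := Set.Ici (0 : ι → ℝ) ∩ Metric.sphere 0 1
  set f := fun v : ι → ℝ => ‖A *ᵥ v - r • v‖
  have hK : IsCompact K := (isCompact_sphere 0 1).inter_left isClosed_Ici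
  have hf : Continuous f := by fun_prop
  have normalize : ∀ w : ι → ℝ, 0 ≤ w → w ≠ 0 →
      ‖w‖⁻¹ • w ∈ K ∧ f (‖w‖⁻¹ • w) = ‖w‖⁻¹ * f w := by
    intro w hw0 hw
    have hpos : 0 < ‖w‖ := norm_pos_iff.mpr hw
    refine ⟨⟨smul_nonneg (inv_nonneg.mpr hpos.le) hw0, ?_⟩, ?_⟩
    · simp [norm_smul, hpos.ne']
    · simp only [f, mulVec_smul, smul_comm r, ← smul_sub, norm_smul, norm_inv, norm_norm]
  obtain ⟨w₁, hw₁0, hw₁, -⟩ := h 1 one_pos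
  obtain ⟨v, ⟨hv0, hv1⟩, hmin⟩ :=
    hK.exists_isMinOn ⟨_, (normalize w₁ hw₁0 hw₁).1⟩ hf.continuousOn
  have hv_ne : v ≠ 0 := by rintro rfl; simp at hv1
  refine ⟨v, hv0, hv_ne, sub_eq_zero.mp (norm_eq_zero.mp (le_antisymm ?_ (norm_nonneg _)))⟩
  by_contra! hpos
  change 0 < f v at hpos
  obtain ⟨w, hw0, hw, hwε⟩ := h (f v / 2) (half_pos hpos)
  obtain ⟨huK, hu⟩ := normalize w hw0 hw
  have hwpos : 0 < ‖w‖ := norm_pos_iff.mpr hw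
  have : f (‖w‖⁻¹ • w) ≤ f v / 2 := by
    rw [hu, inv_mul_le_iff₀ hwpos]; linarith
  linarith [isMinOn_iff.mp hmin _ huK]

variable {A : Matrix ι ι ℝ}

lemma mulVec_mono_of_nonneg (hA : ∀ i j, 0 ≤ A i j) : Monotone (A *ᵥ ·) :=
  fun _ _ hvw i => Finset.sum_le_sum fun j _ => mul_le_mul_of_nonneg_left (hvw j) (hA i j)

lemma pow_smul_le_pow_mulVec [DecidableEq ι] (hA : ∀ i j, 0 ≤ A i j) {r : ℝ} (hr : 0 ≤ r)
    {y : ι → ℝ} (hy : r • y ≤ A *ᵥ y) (k : ℕ) : r ^ k • y ≤ (A ^ k) *ᵥ y := by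
  induction k with
  | zero => simp
  | succ k ih =>
    calc r ^ (k + 1) • y = r ^ k • (r • y) := by rw [pow_succ, mul_smul]
      _ ≤ r ^ k • (A *ᵥ y) := smul_le_smul_of_nonneg_left hy (pow_nonneg hr k)
      _ = A *ᵥ (r ^ k • y) := (mulVec_smul A _ y).symm
      _ ≤ A *ᵥ (A ^ k *ᵥ y) := mulVec_mono_of_nonneg hA ih
      _ = A ^ (k + 1) *ᵥ y := by rw [mulVec_mulVec, pow_succ']

lemma norm_map_ofReal_mulVec_le (hA : ∀ i j, 0 ≤ A i j) (x : ι → ℂ) (i : ι) :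
    ‖(A.map ((↑) : ℝ → ℂ) *ᵥ x) i‖ ≤ (A *ᵥ fun j => ‖x j‖) i := by
  refine (norm_sum_le _ _).trans_eq (Finset.sum_congr rfl fun j _ => ?_)
  simp [Complex.norm_real, abs_of_nonneg (hA i j)]

lemma exists_nonneg_norm_smul_le_mulVec [DecidableEq ι] (hA : ∀ i j, 0 ≤ A i j) {μ : ℂ}
    (hμ : μ ∈ spectrum ℂ (A.map ((↑) : ℝ → ℂ))) :
    ∃ y : ι → ℝ, 0 ≤ y ∧ y ≠ 0 ∧ ‖μ‖ • y ≤ A *ᵥ y := by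
  obtain ⟨x, hx0, hx⟩ := (mem_spectrum_iff_exists_mulVec_eq_smul _ μ).mp hμ
  refine ⟨fun j => ‖x j‖, fun j => norm_nonneg _, fun h => hx0 ?_, fun i => ?_⟩
  · ext j; simpa using congrFun h j
  · simpa [hx, norm_mul] using norm_map_ofReal_mulVec_le hA x i

lemma exists_smul_le_and_smul_sub_mulVec_eq [DecidableEq ι] (hA : ∀ i j, 0 ≤ A i j) {r t : ℝ}
    (hr : 0 ≤ r) (hrt : r < t) (hsum : Summable fun k : ℕ => (t⁻¹ • A) ^ k) {y : ι → ℝ}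
    (hy : r • y ≤ A *ᵥ y) :
    ∃ w : ι → ℝ, (t / (t - r)) • y ≤ w ∧ t • w - A *ᵥ w = t • y := by
  have ht : 0 < t := hr.trans_lt hrt
  set P := t⁻¹ • A
  have hP : ∀ i j, 0 ≤ P i j := fun i j => mul_nonneg (inv_nonneg.mpr ht.le) (hA i j)
  have hPy : (r / t) • y ≤ P *ᵥ y := by
    rw [smul_mulVec, div_eq_inv_mul, mul_smul]
    exact smul_le_smul_of_nonneg_left hy (inv_nonneg.mpr ht.le)
  set w := (∑' k, P ^ k) *ᵥ y
  have hw : HasSum (fun k => P ^ k *ᵥ y) w :=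
    (LinearMap.toContinuousLinearMap ((mulVecBilin ℝ ℝ).flip y)).hasSum hsum.hasSum
  refine ⟨w, ?_, ?_⟩
  · have hrt' : r / t < 1 := (div_lt_one ht).mpr hrt
    have hgeom := (hasSum_geometric_of_lt_one (div_nonneg hr ht.le) hrt').smul_const y
    rw [show (1 - r / t)⁻¹ = t / (t - r) by field_simp] at hgeom
    exact hasSum_le (pow_smul_le_pow_mulVec hP (div_nonneg hr ht.le) hPy) hgeom hw
  · have h := congrArg (· *ᵥ y) hsum.one_sub_mul_tsum_pow
    simp only [← mulVec_mulVec, one_mulVec, sub_mulVec] at h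
    rw [← h, smul_sub, smul_mulVec, smul_smul, mul_inv_cancel₀ ht.ne', one_smul]

lemma exists_nonneg_norm_mulVec_sub_smul_le [DecidableEq ι] (hA : ∀ i j, 0 ≤ A i j) {r : ℝ}
    (hr : 0 ≤ r) (hsum : ∀ t > r, Summable fun k : ℕ => (t⁻¹ • A) ^ k) {y : ι → ℝ}
    (hy0 : 0 ≤ y) (hy_ne : y ≠ 0) (hy : r • y ≤ A *ᵥ y) {ε : ℝ} (hε : 0 < ε) :
    ∃ w : ι → ℝ, 0 ≤ w ∧ w ≠ 0 ∧ ‖A *ᵥ w - r • w‖ ≤ ε * ‖w‖ := by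
  set t := r + ε / 2
  have htr : t - r = ε / 2 := by ring
  have hrt : r < t := by linarith
  obtain ⟨w, hyw, hw⟩ := exists_smul_le_and_smul_sub_mulVec_eq hA hr hrt (hsum t hrt) hy
  have hc : 0 < t / (t - r) := div_pos (by linarith) (by linarith)
  have hcy : 0 ≤ (t / (t - r)) • y := smul_nonneg hc.le hy0
  have hw0 : 0 ≤ w := hcy.trans hyw
  have hnorm : t * ‖y‖ ≤ (t - r) * ‖w‖ := by
    have := Pi.norm_le_norm_of_nonneg_of_le hcy hyw
    rw [norm_smul, Real.norm_of_nonneg hc.le, div_mul_eq_mul_div, div_le_iff₀ (by linarith)]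
      at this
    linarith
  refine ⟨w, hw0, fun h => hy_ne ?_, ?_⟩
  · have : (t / (t - r)) • y = 0 := le_antisymm (h ▸ hyw) hcy
    exact (smul_eq_zero.mp this).resolve_left hc.ne'
  · have hAw : A *ᵥ w - r • w = (t - r) • w - t • y := by
      rw [sub_smul, ← hw]; abel
    calc ‖A *ᵥ w - r • w‖ ≤ (t - r) * ‖w‖ + t * ‖y‖ := by
          rw [hAw]
          refine (norm_sub_le _ _).trans_eq ?_
          rw [norm_smul, norm_smul, Real.norm_of_nonneg (by linarith),
            Real.norm_of_nonneg (by linarith)]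
      _ ≤ ε * ‖w‖ := by rw [htr] at hnorm ⊢; linarith

end Matrix

/-- Perron–Frobenius (existence part): for a nonnegative square matrix `A`, the
spectral radius (the maximum of `|c'|` over the complex eigenvalues `c'` of `A`)
is itself a real eigenvalue of `A`, is nonnegative, and admits an entrywise
nonnegative nonzero eigenvector. -/
theorem perron_frobenius_nonneg
    (n : ℕ) (hn : 0 < n)
    (A : Matrix (Fin n) (Fin n) ℝ)
    (hA : ∀ i j, 0 ≤ A i j) :
    ∃ c : ℝ,
      IsGreatest {r : ℝ | ∃ μ : ℂ,
        μ ∈ spectrum ℂ (A.map Complex.ofReal) ∧ r = ‖μ‖} c ∧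
      0 ≤ c ∧
      c ∈ spectrum ℝ A ∧
      ∃ v : Fin n → ℝ, (∀ i, 0 ≤ v i) ∧ v ≠ 0 ∧ A.mulVec v = c • v := by
  have : Nonempty (Fin n) := ⟨⟨0, hn⟩⟩
  obtain ⟨μ, hμ, hmax⟩ := (A.map Complex.ofReal).exists_mem_spectrum_forall_norm_le
  obtain ⟨y, hy0, hy_ne, hy⟩ := exists_nonneg_norm_smul_le_mulVec hA hμ
  have hsum : ∀ t > ‖μ‖, Summable fun k : ℕ => (t⁻¹ • A) ^ k :=
    fun t ht => A.summable_pow_inv_smul fun ν hν => (hmax ν hν).trans_lt ht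
  obtain ⟨v, hv0, hv_ne, hv⟩ := exists_nonneg_mulVec_eq_smul_of_forall_approx A ‖μ‖
    fun ε hε => exists_nonneg_norm_mulVec_sub_smul_le hA (norm_nonneg μ) hsum hy0 hy_ne hy hε
  refine ⟨‖μ‖, ⟨⟨μ, hμ, rfl⟩, ?_⟩, norm_nonneg μ,
    (mem_spectrum_iff_exists_mulVec_eq_smul A _).mpr ⟨v, hv_ne, hv⟩, v, hv0, hv_ne, hv⟩
  rintro _ ⟨ν, hν, rfl⟩
  exact hmax ν hν
end

section
/- Let A be an n×n real matrix with all entries nonnegative that is primitive, i.e., there exists k ≥ 1 such that every entry of Aᵏ is strictly positive, and suppose its dominant eigenvalue equals 1, with v ∈ ℝ^n an entrywise positive eigenvector for the eigenvalue 1. Then for any starting vector x⁽⁰⁾ ∈ ℝ^n with nonnegative components, x⁽⁰⁾ ≠ 0, the sequence Aᵏ x⁽⁰⁾ converges as k → ∞ to a vector in the direction of v, i.e., there exists a real scalar α > 0 with lim_{k→∞} Aᵏ x⁽⁰⁾ = α v. -/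
/-!
A primitive matrix with a positive fixed vector `v` fixes only the multiples of `v`, and `Aᵀ` also
has a positive fixed vector `w`: the absolute value of any fixed vector of `Aᵀ` is subinvariant,
and pairing with `v` forces equality. The rank-one projection `P = v wᵀ / (w ⬝ᵥ v)` satisfies
`A P = P A = P = P²`, so `Aᵐ = (A - P)ᵐ + P` for `m ≥ 1`. Every nonzero eigenvalue of `A - P` is
an eigenvalue of `A` other than `1`, so Gelfand's formula gives `(A - P)ᵐ → 0`. Hence
`Aᵐ x₀ → P x₀ = (w ⬝ᵥ x₀) / (w ⬝ᵥ v) • v`, and `w ⬝ᵥ x₀ > 0`.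
-/

open Matrix Filter Topology

section BanachAlgebra

variable {A : Type*} [NormedRing A] [NormedAlgebra ℂ A] [CompleteSpace A]

theorem tendsto_pow_atTop_nhds_zero_of_forall_mem_spectrum_norm_lt_one {a : A}
    (ha : ∀ μ ∈ spectrum ℂ a, ‖μ‖ < 1) : Tendsto (a ^ ·) atTop (𝓝 0) := by
  nontriviality A
  have hρ : spectralRadius ℂ a < 1 :=
    spectrum.spectralRadius_lt_of_forall_lt a fun μ hμ => by exact_mod_cast ha μ hμ
  obtain ⟨r, hr, hr1⟩ := ENNReal.lt_iff_exists_nnreal_btwn.mp hρ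
  have hbound : ∀ᶠ n : ℕ in atTop, ‖a ^ n‖ ≤ r ^ n := by
    filter_upwards [(spectrum.gelfand_formula a).eventually_lt_const hr,
      eventually_ne_atTop 0] with n hn hn0
    rw [one_div, ← ENNReal.coe_rpow_of_nonneg _ (by positivity), ENNReal.coe_lt_coe,
      NNReal.rpow_inv_lt_iff (by positivity), NNReal.rpow_natCast] at hn
    exact_mod_cast hn.le
  exact squeeze_zero_norm' hbound
    (tendsto_pow_atTop_nhds_zero_of_lt_one r.coe_nonneg (by exact_mod_cast hr1))

end BanachAlgebra

theorem add_pow_succ_of_mul_eq_zero {R : Type*} [Semiring R] {b p : R} (hbp : b * p = 0)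
    (hpb : p * b = 0) (hp : IsIdempotentElem p) (n : ℕ) :
    (b + p) ^ (n + 1) = b ^ (n + 1) + p := by
  induction n with
  | zero => simp
  | succ n ih =>
    rw [pow_succ, ih, add_mul, mul_add, mul_add, ← pow_succ, pow_succ b n, mul_assoc (b ^ n), hbp,
      hpb, hp.eq, mul_zero, add_zero, zero_add]

namespace Matrix

variable {ι : Type*} [Fintype ι]

theorem dotProduct_pos_of_pos_of_nonneg {w x : ι → ℝ} (hw : ∀ i, 0 < w i)
    (hx : ∀ i, 0 ≤ x i) (hx0 : x ≠ 0) : 0 < w ⬝ᵥ x := by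
  obtain ⟨j, hj⟩ := Function.ne_iff.mp hx0
  exact Finset.sum_pos' (fun i _ => mul_nonneg (hw i).le (hx i))
    ⟨j, Finset.mem_univ j, mul_pos (hw j) ((hx j).lt_of_ne' hj)⟩

theorem mulVec_pos_of_pos_of_nonneg {M : Matrix ι ι ℝ} (hM : ∀ i j, 0 < M i j) {x : ι → ℝ}
    (hx : ∀ i, 0 ≤ x i) (hx0 : x ≠ 0) (i : ι) : 0 < (M *ᵥ x) i :=
  dotProduct_pos_of_pos_of_nonneg (hM i) hx hx0

theorem exists_eq_smul_of_mulVec_eq_self {M : Matrix ι ι ℝ} (hM : ∀ i j, 0 < M i j)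
    {v y : ι → ℝ} (hv : ∀ i, 0 < v i) (hMv : M *ᵥ v = v) (hMy : M *ᵥ y = y) :
    ∃ t : ℝ, y = t • v := by
  cases isEmpty_or_nonempty ι
  · exact ⟨0, Subsingleton.elim _ _⟩
  -- Subtracting the largest multiple of `v` lying below `y` leaves a nonnegative fixed vector
  -- with a zero entry, which positivity of `M` forces to vanish.
  obtain ⟨i₀, hi₀⟩ := Finite.exists_min fun i => y i / v i
  refine ⟨y i₀ / v i₀, by_contra fun hne => ?_⟩
  set z := y - (y i₀ / v i₀) • v
  have hz : ∀ i, 0 ≤ z i := fun i => by simpa [z] using (le_div_iff₀ (hv i)).mp (hi₀ i)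
  have hMz : M *ᵥ z = z := by rw [mulVec_sub, mulVec_smul, hMv, hMy]
  have hpos := mulVec_pos_of_pos_of_nonneg hM hz (sub_ne_zero.mpr hne) i₀
  rw [hMz] at hpos
  simp [z, (hv i₀).ne'] at hpos

theorem vecMul_eq_self_of_le_vecMul {A : Matrix ι ι ℝ} {v z : ι → ℝ} (hv : ∀ i, 0 < v i)
    (hAv : A *ᵥ v = v) (hz : ∀ i, z i ≤ (z ᵥ* A) i) : z ᵥ* A = z := by
  have hsum : (z ᵥ* A - z) ⬝ᵥ v = 0 := by
    rw [sub_dotProduct, ← dotProduct_mulVec, hAv, sub_self]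
  have hterms := (Finset.sum_eq_zero_iff_of_nonneg fun i _ =>
    mul_nonneg (sub_nonneg.mpr (hz i)) (hv i).le).mp hsum
  funext i
  simpa only [Pi.sub_apply, mul_eq_zero, (hv i).ne', or_false, sub_eq_zero] using
    hterms i (Finset.mem_univ i)

def perronProjection {K : Type*} [Field K] (v w : ι → K) : Matrix ι ι K :=
  (w ⬝ᵥ v)⁻¹ • vecMulVec v w

section Projection

variable {K : Type*} [Field K] {v w : ι → K}

theorem perronProjection_mulVec (x : ι → K) :
    perronProjection v w *ᵥ x = ((w ⬝ᵥ x) / (w ⬝ᵥ v)) • v := by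
  rw [perronProjection, smul_mulVec, vecMulVec_mulVec, op_smul_eq_smul, smul_smul, div_eq_inv_mul]

theorem mul_perronProjection {A : Matrix ι ι K} (hAv : A *ᵥ v = v) :
    A * perronProjection v w = perronProjection v w := by
  rw [perronProjection, Matrix.mul_smul, mul_vecMulVec, hAv]

theorem perronProjection_mul {A : Matrix ι ι K} (hwA : w ᵥ* A = w) :
    perronProjection v w * A = perronProjection v w := by
  rw [perronProjection, smul_mul, vecMulVec_mul, hwA]

theorem isIdempotentElem_perronProjection (hwv : w ⬝ᵥ v ≠ 0) :
    IsIdempotentElem (perronProjection v w) := by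
  rw [IsIdempotentElem, perronProjection, Matrix.smul_mul, Matrix.mul_smul,
    vecMulVec_mul_vecMulVec, vecMulVec_smul, smul_smul, smul_smul, mul_assoc,
    inv_mul_cancel₀ hwv, mul_one]

end Projection

variable [DecidableEq ι]

theorem pow_mulVec_eq_self {R : Type*} [CommSemiring R] {M : Matrix ι ι R} {v : ι → R}
    (hv : M *ᵥ v = v) (k : ℕ) : (M ^ k) *ᵥ v = v := by
  induction k with
  | zero => simp
  | succ k ih => rw [pow_succ', ← mulVec_mulVec, ih, hv]

theorem exists_pos_vecMul_eq_self {A : Matrix ι ι ℝ} (hA : ∀ i j, 0 ≤ A i j) {k : ℕ}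
    (hk : ∀ i j, 0 < (A ^ k) i j) {v : ι → ℝ} (hv : ∀ i, 0 < v i) (hAv : A *ᵥ v = v) :
    ∃ w : ι → ℝ, (∀ i, 0 < w i) ∧ w ᵥ* A = w := by
  cases isEmpty_or_nonempty ι
  · exact ⟨0, isEmptyElim, Subsingleton.elim _ _⟩
  have hv0 : v ≠ 0 := fun h => (hv (Classical.arbitrary ι)).ne' (congrFun h _)
  have hdet : (1 - A).det = 0 :=
    exists_mulVec_eq_zero_iff.mp ⟨v, hv0, by rw [sub_mulVec, one_mulVec, hAv, sub_self]⟩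
  obtain ⟨u, hu0, hu⟩ := exists_vecMul_eq_zero_iff.mpr hdet
  rw [vecMul_sub, vecMul_one, sub_eq_zero, eq_comm] at hu
  set w : ι → ℝ := fun i => |u i|
  have hw0 : w ≠ 0 := fun h => hu0 (funext fun i => abs_eq_zero.mp (congrFun h i))
  have hwA : w ᵥ* A = w := by
    refine vecMul_eq_self_of_le_vecMul hv hAv fun j => ?_
    calc w j = |(u ᵥ* A) j| := by rw [hu]
      _ ≤ ∑ i, |u i * A i j| := Finset.abs_sum_le_sum_abs _ _
      _ = (w ᵥ* A) j := by simp only [abs_mul, abs_of_nonneg (hA _ j)]; rfl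
  refine ⟨w, fun i => ?_, hwA⟩
  have hwAk : (A ^ k)ᵀ *ᵥ w = w := by
    rw [transpose_pow]
    exact pow_mulVec_eq_self (by rwa [mulVec_transpose]) k
  rw [← hwAk]
  exact mulVec_pos_of_pos_of_nonneg (fun i j => hk j i) (fun i => abs_nonneg (u i)) hw0 i

theorem mem_spectrum_iff_exists_mulVec_eq_smul_s12 {K : Type*} [Field K] {M : Matrix ι ι K}
    {μ : K} : μ ∈ spectrum K M ↔ ∃ u ≠ 0, M *ᵥ u = μ • u := by
  rw [spectrum.mem_iff, isUnit_iff_isUnit_det, isUnit_iff_ne_zero, not_not,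
    ← exists_mulVec_eq_zero_iff]
  simp only [sub_mulVec, Algebra.algebraMap_eq_smul_one, smul_mulVec, one_mulVec, sub_eq_zero,
    eq_comm]

theorem map_mem_spectrum_map_iff {K L : Type*} [Field K] [Field L] (f : K →+* L)
    {M : Matrix ι ι K} {μ : K} : f μ ∈ spectrum L (M.map f) ↔ μ ∈ spectrum K M := by
  rw [mem_spectrum_iff_isRoot_charpoly, mem_spectrum_iff_isRoot_charpoly, charpoly_map,
    Polynomial.isRoot_map_iff f.injective]

theorem mem_spectrum_add_of_mul_eq_zero {K : Type*} [Field K] {B P : Matrix ι ι K}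
    (hPB : P * B = 0) {μ : K} (hμ : μ ≠ 0) (hμB : μ ∈ spectrum K B) :
    μ ∈ spectrum K (B + P) := by
  obtain ⟨u, hu0, hBu⟩ := mem_spectrum_iff_exists_mulVec_eq_smul_s12.mp hμB
  have hPu : P *ᵥ u = 0 := by
    have : μ • P *ᵥ u = 0 := by rw [← mulVec_smul, ← hBu, mulVec_mulVec, hPB, zero_mulVec]
    exact (smul_eq_zero.mp this).resolve_left hμ
  exact mem_spectrum_iff_exists_mulVec_eq_smul_s12.mpr
    ⟨u, hu0, by rw [add_mulVec, hBu, hPu, add_zero]⟩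

theorem tendsto_pow_atTop_nhds_zero_of_forall_mem_spectrum_norm_lt_one {B : Matrix ι ι ℂ}
    (hB : ∀ μ ∈ spectrum ℂ B, ‖μ‖ < 1) : Tendsto (B ^ ·) atTop (𝓝 0) := by
  let _ : NormedRing (Matrix ι ι ℂ) := Matrix.linftyOpNormedRing
  let _ : NormedAlgebra ℂ (Matrix ι ι ℂ) := Matrix.linftyOpNormedAlgebra
  have : CompleteSpace (Matrix ι ι ℂ) := FiniteDimensional.complete ℂ _
  exact _root_.tendsto_pow_atTop_nhds_zero_of_forall_mem_spectrum_norm_lt_one hB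

theorem tendsto_pow_atTop_nhds_zero_of_forall_mem_spectrum_map_ofReal_norm_lt_one
    {B : Matrix ι ι ℝ} (hB : ∀ μ ∈ spectrum ℂ (B.map Complex.ofReal), ‖μ‖ < 1) :
    Tendsto (B ^ ·) atTop (𝓝 0) := by
  have hre : Continuous fun M : Matrix ι ι ℂ => M.map Complex.re :=
    continuous_id.matrix_map Complex.continuous_re
  convert (hre.tendsto 0).comp (tendsto_pow_atTop_nhds_zero_of_forall_mem_spectrum_norm_lt_one hB)
    using 1
  · ext m : 1
    change B ^ m = ((Complex.ofRealHom.mapMatrix B) ^ m).map Complex.re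
    rw [← map_pow]
    ext i j
    simp
  · simp

theorem norm_lt_one_of_mem_spectrum_map_sub {A P : Matrix ι ι ℝ} (hPA : P * A = P)
    (hP : IsIdempotentElem P) (hfix : ∀ y, A *ᵥ y = y → P *ᵥ y = y)
    (hdom : ∀ μ ∈ spectrum ℂ (A.map Complex.ofReal), μ ≠ 1 → ‖μ‖ < 1) :
    ∀ μ ∈ spectrum ℂ ((A - P).map Complex.ofReal), ‖μ‖ < 1 := by
  have hPB : P * (A - P) = 0 := by rw [mul_sub, hPA, hP.eq, sub_self]
  intro μ hμ
  rcases eq_or_ne μ 0 with rfl | hμ0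
  · simp
  rcases eq_or_ne μ 1 with rfl | hμ1
  · exfalso
    obtain ⟨y, hy0, hy⟩ := mem_spectrum_iff_exists_mulVec_eq_smul_s12.mp <|
      (map_mem_spectrum_map_iff Complex.ofRealHom).mp (by rwa [map_one])
    rw [one_smul] at hy
    have hPy : P *ᵥ y = 0 := by rw [← hy, mulVec_mulVec, hPB, zero_mulVec]
    have hAy : A *ᵥ y = y := by rw [← sub_add_cancel A P, add_mulVec, hy, hPy, add_zero]
    exact hy0 (by rw [← hfix y hAy, hPy])
  · refine hdom μ ?_ hμ1
    have hsplit : A.map Complex.ofReal = (A - P).map Complex.ofReal + P.map Complex.ofReal := by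
      ext i j
      simp
    rw [hsplit]
    refine mem_spectrum_add_of_mul_eq_zero ?_ hμ0 hμ
    have := congrArg Complex.ofRealHom.mapMatrix hPB
    rwa [map_mul, map_zero] at this

theorem tendsto_pow_atTop_nhds_of_spectral_gap {A P : Matrix ι ι ℝ} (hAP : A * P = P)
    (hPA : P * A = P) (hP : IsIdempotentElem P) (hfix : ∀ y, A *ᵥ y = y → P *ᵥ y = y)
    (hdom : ∀ μ ∈ spectrum ℂ (A.map Complex.ofReal), μ ≠ 1 → ‖μ‖ < 1) :
    Tendsto (A ^ ·) atTop (𝓝 P) := by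
  have hB := tendsto_pow_atTop_nhds_zero_of_forall_mem_spectrum_map_ofReal_norm_lt_one
    (norm_lt_one_of_mem_spectrum_map_sub hPA hP hfix hdom)
  have hpow : ∀ n, A ^ (n + 1) = (A - P) ^ (n + 1) + P := fun n => by
    conv_lhs => rw [← sub_add_cancel A P]
    exact add_pow_succ_of_mul_eq_zero (by rw [sub_mul, hAP, hP.eq, sub_self])
      (by rw [mul_sub, hPA, hP.eq, sub_self]) hP n
  rw [← tendsto_add_atTop_iff_nat 1]
  simpa only [hpow, zero_add] using ((tendsto_add_atTop_iff_nat 1).mpr hB).add_const P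

end Matrix

theorem perron_frobenius_power_iteration_converges_general
    (n : ℕ)
    (A : Matrix (Fin n) (Fin n) ℝ)
    (hA : ∀ i j, 0 ≤ A i j)
    (hprim : ∃ k : ℕ, 1 ≤ k ∧ ∀ i j, 0 < (A ^ k) i j)
    (hdom : ∀ μ : ℂ, μ ∈ spectrum ℂ (A.map Complex.ofReal) → μ ≠ 1 →
      ‖μ‖ < 1)
    (v : Fin n → ℝ)
    (hv : ∀ i, 0 < v i)
    (hveig : A.mulVec v = (1 : ℝ) • v)
    (x₀ : Fin n → ℝ)
    (hx₀ : ∀ i, 0 ≤ x₀ i)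
    (hx₀ne : x₀ ≠ 0) :
    ∃ α : ℝ, 0 < α ∧
      Tendsto (fun k => (A ^ k).mulVec x₀) atTop (nhds (α • v)) := by
  obtain ⟨k, -, hk⟩ := hprim
  have hAv : A *ᵥ v = v := by rw [hveig, one_smul]
  obtain ⟨w, hw, hwA⟩ := exists_pos_vecMul_eq_self hA hk hv hAv
  have hv0 : v ≠ 0 := fun h => hx₀ne (funext fun i => ((hv i).ne' (congrFun h i)).elim)
  have hwv : 0 < w ⬝ᵥ v := dotProduct_pos_of_pos_of_nonneg hw (fun i => (hv i).le) hv0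
  have hfix : ∀ y, A *ᵥ y = y → perronProjection v w *ᵥ y = y := fun y hy => by
    obtain ⟨t, rfl⟩ := exists_eq_smul_of_mulVec_eq_self hk hv (pow_mulVec_eq_self hAv k)
      (pow_mulVec_eq_self hy k)
    rw [perronProjection_mulVec, dotProduct_smul, smul_eq_mul, mul_div_cancel_right₀ _ hwv.ne']
  have hlim := tendsto_pow_atTop_nhds_of_spectral_gap (mul_perronProjection hAv)
    (perronProjection_mul hwA) (isIdempotentElem_perronProjection hwv.ne') hfix hdom
  refine ⟨(w ⬝ᵥ x₀) / (w ⬝ᵥ v), div_pos (dotProduct_pos_of_pos_of_nonneg hw hx₀ hx₀ne) hwv, ?_⟩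
  rw [← perronProjection_mulVec]
  exact ((continuous_id.matrix_mulVec continuous_const).tendsto _).comp hlim

/-- Perron–Frobenius (convergence part): if a nonnegative primitive matrix `A`
has dominant eigenvalue 1, with entrywise positive eigenvector `v` for the
eigenvalue 1, then for any nonnegative nonzero starting vector `x⁽⁰⁾`, the
sequence `Aᵏ x⁽⁰⁾` converges to a positive multiple of `v`. -/
theorem perron_frobenius_power_iteration_converges
    (n : ℕ)
    (A : Matrix (Fin n) (Fin n) ℝ)
    (hA : ∀ i j, 0 ≤ A i j)
    (hprim : ∃ k : ℕ, 1 ≤ k ∧ ∀ i j, 0 < (A ^ k) i j)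
    (hone : (1 : ℝ) ∈ spectrum ℝ A)
    (hdom : ∀ μ : ℂ, μ ∈ spectrum ℂ (A.map Complex.ofReal) → μ ≠ 1 →
      ‖μ‖ < 1)
    (v : Fin n → ℝ)
    (hv : ∀ i, 0 < v i)
    (hveig : A.mulVec v = (1 : ℝ) • v)
    (x₀ : Fin n → ℝ)
    (hx₀ : ∀ i, 0 ≤ x₀ i)
    (hx₀ne : x₀ ≠ 0) :
    ∃ α : ℝ, 0 < α ∧
      Tendsto (fun k => (A ^ k).mulVec x₀) atTop (nhds (α • v)) :=
  perron_frobenius_power_iteration_converges_general n A hA hprim hdom v hv hveig x₀ hx₀ hx₀ne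
end
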